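/- arXiv:2009.13129 — 4 statements merged into one kernel-verified Lean document; each statement's English description precedes it below -/
import Mathlib

section
/- Let O, D be independent random times and τ > 0. Define T = min(O,D)·1{D ≤ τ} + O·1{D > τ}. Then P(T > t) = S_O(t) · [ (S_D(t) − S_D(τ))·1{t ≤ τ} + S_D(τ) ] for all t ≥ 0. -/
open MeasureTheory ProbabilityTheory
open scoped ENNReal

/-! The event `{T > t}` is `{O > t} ∩ {D > min t τ}`: before the cure time the disease must not
have occurred yet, after it the patient must merely not have had the disease before `τ`.
Independence factorises its probability, and the bracket in the statement is `S_D (min t τ)`. -/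

lemma lt_ite_le_min_iff {α : Type*} [LinearOrder α] {t τ o d : α} :
    t < (if d ≤ τ then min o d else o) ↔ t < o ∧ min t τ < d := by
  rw [min_lt_iff]
  split_ifs with h
  · rw [lt_min_iff]
    constructor
    · exact fun ⟨ho, hd⟩ => ⟨ho, Or.inl hd⟩
    · rintro ⟨ho, hd | hd⟩
      · exact ⟨ho, hd⟩
      · exact absurd h (not_le.mpr hd)
  · exact ⟨fun ho => ⟨ho, Or.inr (not_le.mp h)⟩, And.left⟩

lemma ite_measure_sub_add_eq_measure_min_lt {Ω : Type*} [MeasurableSpace Ω] (μ : Measure Ω)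
    (D : Ω → ℝ) (t τ : ℝ) :
    (if t ≤ τ then μ {ω | t < D ω} - μ {ω | τ < D ω} else 0) + μ {ω | τ < D ω} =
      μ {ω | min t τ < D ω} := by
  split_ifs with h
  · rw [min_eq_left h]
    exact tsub_add_cancel_of_le (measure_mono fun ω hω => lt_of_le_of_lt h hω)
  · rw [zero_add, min_eq_right (le_of_not_ge h)]

theorem stmt4_general {Ω : Type*} [MeasurableSpace Ω] (μ : Measure Ω)
    (O D : Ω → ℝ)
    (hindep : IndepFun O D μ) (τ : ℝ) :
    ∀ t : ℝ, 0 ≤ t →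
      μ {ω | t < (if D ω ≤ τ then min (O ω) (D ω) else O ω)} =
        μ {ω | t < O ω} *
          ((if t ≤ τ then μ {ω | t < D ω} - μ {ω | τ < D ω} else 0) + μ {ω | τ < D ω}) := by
  intro t _
  have hevent : {ω | t < (if D ω ≤ τ then min (O ω) (D ω) else O ω)} =
      O ⁻¹' Set.Ioi t ∩ D ⁻¹' Set.Ioi (min t τ) :=
    Set.ext fun _ => lt_ite_le_min_iff (α := ℝ)
  rw [ite_measure_sub_add_eq_measure_min_lt, hevent]
  exact hindep.measure_inter_preimage_eq_mul _ _ measurableSet_Ioi measurableSet_Ioi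

/-- Cure-time model survival representation: for independent random times `O, D` and `τ > 0`,
with `T = min(O,D)·1{D ≤ τ} + O·1{D > τ}`,
`P(T > t) = S_O(t) · [(S_D(t) − S_D(τ))·1{t ≤ τ} + S_D(τ)]` for all `t ≥ 0`. -/
theorem stmt4 {Ω : Type*} [MeasurableSpace Ω] (μ : Measure Ω) [IsProbabilityMeasure μ]
    (O D : Ω → ℝ) (hOm : Measurable O) (hDm : Measurable D)
    (hindep : IndepFun O D μ) (τ : ℝ) (hτ : 0 < τ) :
    ∀ t : ℝ, 0 ≤ t →
      μ {ω | t < (if D ω ≤ τ then min (O ω) (D ω) else O ω)} =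
        μ {ω | t < O ω} *
          ((if t ≤ τ then μ {ω | t < D ω} - μ {ω | τ < D ω} else 0) + μ {ω | τ < D ω}) :=
  stmt4_general μ O D hindep τ
end

section
/- Let O, D be independent random times and τ > 0 with S_O(τ) S_D(τ) > 0. If T = min(O,D)·1{D ≤ τ} + O·1{D > τ}, then for all t > τ, P(T > t | T > τ) = P(O > t | O > τ). -/
open MeasureTheory ProbabilityTheory
open scoped ENNReal

/-! Past `τ`, the cure time `T` exceeds a level `s ≥ τ` exactly when `O > s` and `D > τ`.
By independence the factor `P(D > τ)` splits off and cancels in `P(T > t) / P(T > τ)`. -/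

theorem setOf_lt_cureTime {Ω α : Type*} [LinearOrder α] (O D : Ω → α) {τ s : α} (hs : τ ≤ s) :
    {ω | s < (if D ω ≤ τ then min (O ω) (D ω) else O ω)} = O ⁻¹' Set.Ioi s ∩ D ⁻¹' Set.Ioi τ := by
  ext ω
  by_cases hD : D ω ≤ τ
  · have : ¬ s < min (O ω) (D ω) := not_lt.mpr ((min_le_right _ _).trans (hD.trans hs))
    simp [hD, this]
  · simp [hD, lt_of_not_ge hD]

theorem ProbabilityTheory.IndepFun.measure_preimage_inter_div {Ω α β : Type*} [MeasurableSpace Ω]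
    [MeasurableSpace α] [MeasurableSpace β] {μ : Measure Ω} [IsFiniteMeasure μ]
    {X : Ω → α} {Y : Ω → β} (hXY : IndepFun X Y μ) {s s' : Set α} {u : Set β}
    (hs : MeasurableSet s) (hs' : MeasurableSet s') (hu : MeasurableSet u)
    (hYu : μ (Y ⁻¹' u) ≠ 0) :
    μ (X ⁻¹' s ∩ Y ⁻¹' u) / μ (X ⁻¹' s' ∩ Y ⁻¹' u) = μ (X ⁻¹' s) / μ (X ⁻¹' s') := by
  rw [hXY.measure_inter_preimage_eq_mul _ _ hs hu, hXY.measure_inter_preimage_eq_mul _ _ hs' hu,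
    ENNReal.mul_div_mul_right _ _ hYu (measure_ne_top μ _)]

theorem stmt5_general {Ω : Type*} [MeasurableSpace Ω] (μ : Measure Ω) [IsProbabilityMeasure μ]
    (O D : Ω → ℝ)
    (hindep : IndepFun O D μ) (τ : ℝ)
    (hSD : μ {ω | τ < D ω} ≠ 0) :
    ∀ t : ℝ, τ < t →
      μ ({ω | t < (if D ω ≤ τ then min (O ω) (D ω) else O ω)} ∩
          {ω | τ < (if D ω ≤ τ then min (O ω) (D ω) else O ω)}) /
        μ {ω | τ < (if D ω ≤ τ then min (O ω) (D ω) else O ω)} =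
      μ ({ω | t < O ω} ∩ {ω | τ < O ω}) / μ {ω | τ < O ω} := by
  intro t ht
  have hsub : ∀ f : Ω → ℝ, {ω | t < f ω} ⊆ {ω | τ < f ω} := fun _ _ h => ht.trans h
  rw [Set.inter_eq_left.mpr (hsub _), Set.inter_eq_left.mpr (hsub O),
    setOf_lt_cureTime O D ht.le, setOf_lt_cureTime O D le_rfl]
  exact hindep.measure_preimage_inter_div measurableSet_Ioi measurableSet_Ioi measurableSet_Ioi hSD

/-- The cure-time random-variable representation implies statistical cure: for independent
`O, D` with `S_O(τ) > 0`, `S_D(τ) > 0`, and `T = min(O,D)·1{D ≤ τ} + O·1{D > τ}`, one has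
`P(T > t | T > τ) = P(O > t | O > τ)` for all `t > τ`. -/
theorem stmt5 {Ω : Type*} [MeasurableSpace Ω] (μ : Measure Ω) [IsProbabilityMeasure μ]
    (O D : Ω → ℝ) (hOm : Measurable O) (hDm : Measurable D)
    (hindep : IndepFun O D μ) (τ : ℝ) (hτ : 0 < τ)
    (hSO : μ {ω | τ < O ω} ≠ 0) (hSD : μ {ω | τ < D ω} ≠ 0) :
    ∀ t : ℝ, τ < t →
      μ ({ω | t < (if D ω ≤ τ then min (O ω) (D ω) else O ω)} ∩
          {ω | τ < (if D ω ≤ τ then min (O ω) (D ω) else O ω)}) /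
        μ {ω | τ < (if D ω ≤ τ then min (O ω) (D ω) else O ω)} =
      μ ({ω | t < O ω} ∩ {ω | τ < O ω}) / μ {ω | τ < O ω} :=
  stmt5_general μ O D hindep τ hSD
end

section
/- Let O, D, C be mutually independent absolutely continuous nonnegative random variables and τ > 0. Define T = min(O,D)·1{D ≤ τ} + O·1{D > τ}, Z = min(T,C). Then P(Z > z, Z = O) = ∫_z^∞ U_D(o;τ) f_O(o) S_C(o) do, where U_D(o;τ) = (S_D(o) − S_D(τ))·1{o ≤ τ} + S_D(τ); hence the sub-density of observing death from other causes at time z is U_D(z;τ) f_O(z) S_C(z). -/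
/-!
Condition on `O = o`. The event `{Z = O}` means `o < C` and that the cure time `D` is still
pending at `o`, i.e. `D > o` or `D > τ`, i.e. `D > min o τ`. Since `D` and `C` are independent of
`O` and of each other, the conditional probability is `S_D(min o τ) · S_C(o) = U_D(o;τ) S_C(o)`,
and integrating against the density `f_O` gives the sub-density.
-/

open MeasureTheory ProbabilityTheory Set
open scoped ENNReal

theorem antitone_measure_lt {Ω : Type*} [MeasurableSpace Ω] (μ : Measure Ω) (X : Ω → ℝ) :
    Antitone fun t => μ {ω | t < X ω} :=
  fun _ _ hab => measure_mono fun _ h => lt_of_le_of_lt hab h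

theorem sub_mul_ite_add_eq_apply_min (S : ℝ → ℝ) (τ t : ℝ) :
    (S t - S τ) * (if t ≤ τ then 1 else 0) + S τ = S (min t τ) := by
  rcases le_or_gt t τ with h | h
  · rw [if_pos h, min_eq_left h]; ring
  · rw [if_neg h.not_ge, min_eq_right h.le]; ring

theorem ofReal_setIntegral_eq_setLIntegral {α : Type*} [MeasurableSpace α] {ν : Measure α}
    {h : α → ℝ} (hm : Measurable h) (hnn : ∀ x, 0 ≤ h x) {s : Set α}
    (hfin : ∫⁻ x in s, ENNReal.ofReal (h x) ∂ν ≠ ∞) :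
    ENNReal.ofReal (∫ x in s, h x ∂ν) = ∫⁻ x in s, ENNReal.ofReal (h x) ∂ν := by
  have hnn' : 0 ≤ᵐ[ν.restrict s] h := .of_forall hnn
  refine ofReal_integral_eq_lintegral_ofReal ⟨hm.aestronglyMeasurable, ?_⟩ hnn'
  rw [hasFiniteIntegral_iff_ofReal hnn']
  exact hfin.lt_top

theorem ProbabilityTheory.iIndepFun.indepFun_prodMk_of_three {Ω β : Type*} [MeasurableSpace Ω]
    [MeasurableSpace β] {μ : Measure Ω}
    {X Y Z : Ω → β} (h : iIndepFun ![X, Y, Z] μ)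
    (hX : Measurable X) (hY : Measurable Y) (hZ : Measurable Z) :
    IndepFun X (fun ω => (Y ω, Z ω)) μ := by
  have hmeas : ∀ i, Measurable (![X, Y, Z] i) := by
    intro i; fin_cases i <;> assumption
  have := h.indepFun_prodMk hmeas 1 2 0 (by decide) (by decide)
  exact (by simpa using this : IndepFun (fun ω => (Y ω, Z ω)) X μ).symm

section Independence

variable {Ω : Type*} [MeasurableSpace Ω] {μ : Measure Ω} [IsFiniteMeasure μ]

theorem ProbabilityTheory.IndepFun.measure_preimage_eq_lintegral {α β : Type*}
    [MeasurableSpace α] [MeasurableSpace β] {X : Ω → α} {Y : Ω → β}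
    (hXY : IndepFun X Y μ) (hX : Measurable X) (hY : Measurable Y)
    {B : Set (α × β)} (hB : MeasurableSet B) :
    μ ((fun ω => (X ω, Y ω)) ⁻¹' B) = ∫⁻ x, μ.map Y (Prod.mk x ⁻¹' B) ∂μ.map X := by
  rw [← Measure.map_apply (hX.prodMk hY) hB,
    (indepFun_iff_map_prod_eq_prod_map_map hX.aemeasurable hY.aemeasurable).1 hXY,
    Measure.prod_apply hB]

theorem measure_mem_lt_lt_eq_setLIntegral_map {O D C : Ω → ℝ}
    (hO : Measurable O) (hD : Measurable D) (hC : Measurable C)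
    (hO_DC : IndepFun O (fun ω => (D ω, C ω)) μ) (hDC : IndepFun D C μ)
    {g : ℝ → ℝ} (hg : Measurable g) {s : Set ℝ} (hs : MeasurableSet s) :
    μ {ω | O ω ∈ s ∧ O ω < C ω ∧ g (O ω) < D ω} =
      ∫⁻ o in s, μ {ω | g o < D ω} * μ {ω | o < C ω} ∂μ.map O := by
  set B : Set (ℝ × ℝ × ℝ) := {p | p.1 ∈ s ∧ p.1 < p.2.2 ∧ g p.1 < p.2.1}
  have hB : MeasurableSet B :=
    (hs.preimage measurable_fst).inter
      ((measurableSet_lt measurable_fst measurable_snd.snd).inter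
        (measurableSet_lt (hg.comp measurable_fst) measurable_snd.fst))
  have hslice : ∀ o, μ.map (fun ω => (D ω, C ω)) (Prod.mk o ⁻¹' B) =
      s.indicator (fun o => μ {ω | g o < D ω} * μ {ω | o < C ω}) o := by
    intro o
    by_cases ho : o ∈ s
    · have hpre : Prod.mk o ⁻¹' B = Ioi (g o) ×ˢ Ioi o := by
        ext q
        simp only [B, mem_preimage, mem_ofPred_eq, mem_prod, mem_Ioi, ho, true_and]
        exact and_comm
      rw [hpre, Measure.map_apply (hD.prodMk hC) (measurableSet_Ioi.prod measurableSet_Ioi),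
        indicator_of_mem ho]
      exact hDC.measure_inter_preimage_eq_mul _ _ measurableSet_Ioi measurableSet_Ioi
    · have hpre : Prod.mk o ⁻¹' B = ∅ := by
        ext q
        simp [B, ho]
      rw [hpre, measure_empty, indicator_of_notMem ho]
  calc μ {ω | O ω ∈ s ∧ O ω < C ω ∧ g (O ω) < D ω}
      = ∫⁻ o, μ.map (fun ω => (D ω, C ω)) (Prod.mk o ⁻¹' B) ∂μ.map O :=
        hO_DC.measure_preimage_eq_lintegral hO (hD.prodMk hC) hB
    _ = ∫⁻ o in s, μ {ω | g o < D ω} * μ {ω | o < C ω} ∂μ.map O := by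
        simp_rw [hslice]
        exact lintegral_indicator hs _

theorem measure_mem_lt_lt_eq_setLIntegral_density {O D C : Ω → ℝ}
    (hO : Measurable O) (hD : Measurable D) (hC : Measurable C)
    (hO_DC : IndepFun O (fun ω => (D ω, C ω)) μ) (hDC : IndepFun D C μ)
    {g : ℝ → ℝ} (hg : Measurable g) {s : Set ℝ} (hs : MeasurableSet s)
    {ν : Measure ℝ} {f : ℝ → ℝ≥0∞} (hf : Measurable f) (hOmap : μ.map O = ν.withDensity f) :
    μ {ω | O ω ∈ s ∧ O ω < C ω ∧ g (O ω) < D ω} =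
      ∫⁻ o in s, f o * (μ {ω | g o < D ω} * μ {ω | o < C ω}) ∂ν := by
  rw [measure_mem_lt_lt_eq_setLIntegral_map hO hD hC hO_DC hDC hg hs, hOmap]
  exact setLIntegral_withDensity_eq_setLIntegral_mul _ hf
    (((antitone_measure_lt μ D).measurable.comp hg).mul (antitone_measure_lt μ C).measurable) hs

end Independence

theorem stmt13_general {Ω : Type*} [MeasurableSpace Ω] (μ : Measure Ω) [IsProbabilityMeasure μ]
    (O D C : Ω → ℝ) (hOm : Measurable O) (hDm : Measurable D) (hCm : Measurable C)
    (hindep : iIndepFun ![O, D, C] μ)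
    (τ : ℝ)
    (fO : ℝ → ℝ) (hfOm : Measurable fO) (hfOnn : ∀ o, 0 ≤ fO o)
    (hOmap : Measure.map O μ = volume.withDensity (fun o => ENNReal.ofReal (fO o)))
    (SD SC U : ℝ → ℝ)
    (hSD : ∀ t, SD t = (μ {ω | t < D ω}).toReal)
    (hSC : ∀ t, SC t = (μ {ω | t < C ω}).toReal)
    (hU : ∀ t, U t = (SD t - SD τ) * (if t ≤ τ then 1 else 0) + SD τ) :
    (∀ z : ℝ, μ {ω | z < O ω ∧ O ω < C ω ∧ (O ω < D ω ∨ τ < D ω)} =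
      ENNReal.ofReal (∫ o in Set.Ioi z, U o * fO o * SC o)) ∧
    (∀ s : Set ℝ, MeasurableSet s →
      μ {ω | O ω ∈ s ∧ O ω < C ω ∧ (O ω < D ω ∨ τ < D ω)} =
        ∫⁻ o in s, ENNReal.ofReal (U o * fO o * SC o)) := by
  have hO_DC := hindep.indepFun_prodMk_of_three hOm hDm hCm
  have hDC : IndepFun D C μ := by simpa using hindep.indepFun (i := 1) (j := 2) (by decide)
  have hU_min : ∀ o, U o = (μ {ω | min o τ < D ω}).toReal := fun o => by
    rw [hU, sub_mul_ite_add_eq_apply_min, hSD]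
  have hUnn : ∀ o, 0 ≤ U o := fun o => hU_min o ▸ ENNReal.toReal_nonneg
  have hSCnn : ∀ o, 0 ≤ SC o := fun o => hSC o ▸ ENNReal.toReal_nonneg
  have hintegrand : ∀ o, ENNReal.ofReal (U o * fO o * SC o) =
      ENNReal.ofReal (fO o) * (μ {ω | min o τ < D ω} * μ {ω | o < C ω}) := fun o => by
    rw [ENNReal.ofReal_mul (mul_nonneg (hUnn o) (hfOnn o)), ENNReal.ofReal_mul (hUnn o),
      hU_min, hSC, ENNReal.ofReal_toReal (measure_ne_top μ _),
      ENNReal.ofReal_toReal (measure_ne_top μ _)]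
    ring
  have hdensity : ∀ s : Set ℝ, MeasurableSet s →
      μ {ω | O ω ∈ s ∧ O ω < C ω ∧ (O ω < D ω ∨ τ < D ω)} =
        ∫⁻ o in s, ENNReal.ofReal (U o * fO o * SC o) := fun s hs => by
    simp_rw [← min_lt_iff, hintegrand]
    exact measure_mem_lt_lt_eq_setLIntegral_density hOm hDm hCm hO_DC hDC
      (g := fun o => min o τ) (by fun_prop) hs hfOm.ennreal_ofReal hOmap
  refine ⟨fun z => ?_, hdensity⟩
  have hm : Measurable fun o => U o * fO o * SC o := by
    simp only [hU_min, hSC]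
    exact (((antitone_measure_lt μ D).measurable.comp (by fun_prop)).ennreal_toReal.mul
      hfOm).mul (antitone_measure_lt μ C).measurable.ennreal_toReal
  rw [ofReal_setIntegral_eq_setLIntegral hm
      fun o => mul_nonneg (mul_nonneg (hUnn o) (hfOnn o)) (hSCnn o),
    ← hdensity _ measurableSet_Ioi]
  · rfl
  · rw [← hdensity _ measurableSet_Ioi]
    exact measure_ne_top μ _

/-- Likelihood contribution for death from other causes (`δ = 1`) in the cure time model:
for mutually independent absolutely continuous `O, D, C` and `τ > 0`, with
`T = min(O,D)·1{D ≤ τ} + O·1{D > τ}`, `Z = min(T,C)`,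
`P(Z > z, Z = O) = ∫_z^∞ U_D(o;τ) f_O(o) S_C(o) do` where
`U_D(o;τ) = (S_D(o) − S_D(τ))·1{o ≤ τ} + S_D(τ)`; hence the sub-density is
`U_D(z;τ) f_O(z) S_C(z)`. -/
theorem stmt13 {Ω : Type*} [MeasurableSpace Ω] (μ : Measure Ω) [IsProbabilityMeasure μ]
    (O D C : Ω → ℝ) (hOm : Measurable O) (hDm : Measurable D) (hCm : Measurable C)
    (hOnn : ∀ ω, 0 ≤ O ω) (hDnn : ∀ ω, 0 ≤ D ω) (hCnn : ∀ ω, 0 ≤ C ω)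
    (hindep : iIndepFun ![O, D, C] μ)
    (τ : ℝ) (hτ : 0 < τ)
    (fO : ℝ → ℝ) (hfOm : Measurable fO) (hfOnn : ∀ o, 0 ≤ fO o)
    (hOmap : Measure.map O μ = volume.withDensity (fun o => ENNReal.ofReal (fO o)))
    (hDcont : ∀ t : ℝ, μ {ω | D ω = t} = 0)
    (hCcont : ∀ t : ℝ, μ {ω | C ω = t} = 0)
    (SD SC U : ℝ → ℝ)
    (hSD : ∀ t, SD t = (μ {ω | t < D ω}).toReal)
    (hSC : ∀ t, SC t = (μ {ω | t < C ω}).toReal)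
    (hU : ∀ t, U t = (SD t - SD τ) * (if t ≤ τ then 1 else 0) + SD τ) :
    (∀ z : ℝ, μ {ω | z < O ω ∧ O ω < C ω ∧ (O ω < D ω ∨ τ < D ω)} =
      ENNReal.ofReal (∫ o in Set.Ioi z, U o * fO o * SC o)) ∧
    (∀ s : Set ℝ, MeasurableSet s →
      μ {ω | O ω ∈ s ∧ O ω < C ω ∧ (O ω < D ω ∨ τ < D ω)} =
        ∫⁻ o in s, ENNReal.ofReal (U o * fO o * SC o)) :=
  stmt13_general μ O D C hOm hDm hCm hindep τ fO hfOm hfOnn hOmap SD SC U hSD hSC hU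
end

section
/- Let O, D, C be mutually independent absolutely continuous nonnegative random variables and τ > 0, T = min(O,D)·1{D ≤ τ} + O·1{D > τ}. Then the density of T at t equals (h_O(t) + h_D(t)·1{t ≤ τ}) · S_O(t) · U_D(t;τ), where h_O, h_D are the hazards of O and D and U_D(t;τ) = (S_D(t) − S_D(τ))·1{t ≤ τ} + S_D(τ). -/
open MeasureTheory ProbabilityTheory Set
open scoped ENNReal

/-!
Slicing the product law of `(O, D)` at `O = x`, the event `T ∈ s` is `{D ≥ x} ∪ {D > τ}` when
`x ∈ s`, plus `{D < x, D ≤ τ, D ∈ s}`. Since `D` has no atoms, the first piece has probability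
`S_D(min(x, τ)) = U_D(x; τ)`, and Tonelli turns the integral of the second piece against the law
of `O` into `∫_{s ∩ (-∞, τ]} f_D(t) S_O(t) dt`. Hence `T` has density
`f_O(t) U_D(t; τ) + f_D(t) S_O(t) 1{t ≤ τ}`, which is the claimed expression once the hazards are
multiplied back by the survival functions. This is exact almost everywhere because the upper set
`{t | S_O(t) = 0}` is null for the law of `O`, so `f_O` vanishes a.e. on it (likewise for `D`).
-/

/- The set of `x` with `ν (Ioi x) = 0` is an upper set: apart from its possible least element,
it is covered by the null sets `Ioi q` with `q` rational in it. -/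
theorem ae_pos_measure_Ioi (ν : Measure ℝ) [NullSingletonClass ν] : ∀ᵐ x ∂ν, 0 < ν (Ioi x) := by
  set A := {x : ℝ | ν (Ioi x) = 0}
  have hcover : A ⊆ {x ∈ A | ∀ a ∈ A, ¬a < x} ∪ ⋃ q : {q : ℚ // (q : ℝ) ∈ A}, Ioi (q : ℝ) := by
    intro x hx
    by_cases hmin : ∃ a ∈ A, a < x
    · obtain ⟨a, ha, hax⟩ := hmin
      obtain ⟨q, haq, hqx⟩ := exists_rat_btwn hax
      exact Or.inr (mem_iUnion.2 ⟨⟨q, measure_mono_null (Ioi_subset_Ioi haq.le) ha⟩, hqx⟩)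
    · exact Or.inl ⟨hx, fun a ha => (not_exists.1 hmin a) ∘ And.intro ha⟩
  have hA_null : ν A = 0 := by
    refine measure_mono_null hcover (measure_union_null ?_ (measure_iUnion_null fun q => q.2))
    refine Subsingleton.measure_zero (fun x hx y hy => ?_) ν
    exact le_antisymm (not_lt.1 (hx.2 y hy.1)) (not_lt.1 (hy.2 x hx.1))
  simpa only [ae_iff, pos_iff_ne_zero, not_not] using hA_null

theorem ae_eq_zero_of_withDensity_Ioi_eq_zero {μ : Measure ℝ} [NullSingletonClass μ] {f : ℝ → ℝ≥0∞}
    (hf : Measurable f) : ∀ᵐ t ∂μ, μ.withDensity f (Ioi t) = 0 → f t = 0 := by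
  filter_upwards [(ae_withDensity_iff hf).1 (ae_pos_measure_Ioi (μ.withDensity f))]
    with t ht hzero
  by_contra hne
  exact (ht hne).ne' hzero

theorem ofReal_toReal_measure_lt {Ω : Type*} [MeasurableSpace Ω] (μ : Measure Ω)
    [IsFiniteMeasure μ] {X : Ω → ℝ} (hX : Measurable X) (t : ℝ) :
    ENNReal.ofReal (μ {ω | t < X ω}).toReal = μ.map X (Ioi t) := by
  rw [Measure.map_apply hX measurableSet_Ioi, ENNReal.ofReal_toReal (measure_ne_top _ _)]
  rfl

theorem div_add_div_mul_mul_of_imp {K : Type*} [Field K] {a b c d : K} (hb : b = 0 → a = 0)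
    (hd : d = 0 → c = 0) : (a / b + c / d) * b * d = a * d + c * b :=
  calc (a / b + c / d) * b * d = a / b * b * d + c / d * d * b := by ring
    _ = a * d + c * b := by rw [div_mul_cancel_of_imp hb, div_mul_cancel_of_imp hd]

theorem measurable_measure_Ioi (ν : Measure ℝ) : Measurable fun x => ν (Ioi x) :=
  Antitone.measurable fun _ _ hab => measure_mono (Ioi_subset_Ioi hab)

noncomputable def cureTime (τ : ℝ) (p : ℝ × ℝ) : ℝ := if p.2 ≤ τ then min p.1 p.2 else p.1

theorem measurable_cureTime (τ : ℝ) : Measurable (cureTime τ) :=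
  Measurable.ite (measurableSet_le measurable_snd measurable_const)
    (measurable_fst.min measurable_snd) measurable_fst

theorem preimage_cureTime_slice_of_mem {τ x : ℝ} {s : Set ℝ} (hx : x ∈ s) :
    Prod.mk x ⁻¹' (cureTime τ ⁻¹' s) = (Ici x ∪ Ioi τ) ∪ (Iio x ∩ Iic τ ∩ s) := by
  ext y
  simp only [cureTime, mem_preimage, mem_union, mem_inter_iff, mem_Ici, mem_Ioi, mem_Iio,
    mem_Iic]
  split_ifs <;> rcases le_total x y with hxy | hxy <;> grind

theorem preimage_cureTime_slice_of_notMem {τ x : ℝ} {s : Set ℝ} (hx : x ∉ s) :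
    Prod.mk x ⁻¹' (cureTime τ ⁻¹' s) = Iio x ∩ Iic τ ∩ s := by
  ext y
  simp only [cureTime, mem_preimage, mem_inter_iff, mem_Iio, mem_Iic]
  split_ifs <;> rcases le_total x y with hxy | hxy <;> grind

theorem lintegral_measure_Iio_inter (νO νD : Measure ℝ) [SFinite νO] [SFinite νD] {A : Set ℝ}
    (hA : MeasurableSet A) :
    ∫⁻ x, νD (Iio x ∩ A) ∂νO = ∫⁻ y in A, νO (Ioi y) ∂νD := by
  have hE : MeasurableSet {p : ℝ × ℝ | p.2 < p.1 ∧ p.2 ∈ A} :=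
    (measurableSet_lt measurable_snd measurable_fst).inter (measurable_snd hA)
  rw [← lintegral_indicator hA]
  calc ∫⁻ x, νD (Iio x ∩ A) ∂νO = νO.prod νD {p | p.2 < p.1 ∧ p.2 ∈ A} :=
        (Measure.prod_apply hE).symm
    _ = ∫⁻ y, A.indicator (fun y => νO (Ioi y)) y ∂νD := by
        rw [Measure.prod_apply_symm hE]
        refine lintegral_congr fun y => ?_
        by_cases hy : y ∈ A <;> simp [hy, Set.indicator, Ioi]

/- The first term is the event that `T = O`, i.e. `D ≥ O` or `D > τ`; the second is the event
`T = D ≤ τ < O`. -/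
theorem prod_preimage_cureTime (νO νD : Measure ℝ) [SFinite νO] [SFinite νD] [NullSingletonClass νD]
    (τ : ℝ) {s : Set ℝ} (hs : MeasurableSet s) :
    νO.prod νD (cureTime τ ⁻¹' s) =
      ∫⁻ x in s, νD (Ioi (min x τ)) ∂νO + ∫⁻ y in Iic τ ∩ s, νO (Ioi y) ∂νD := by
  have hslice : ∀ x, νD (Prod.mk x ⁻¹' (cureTime τ ⁻¹' s)) =
      s.indicator (fun x => νD (Ioi (min x τ))) x + νD (Iio x ∩ (Iic τ ∩ s)) := by
    intro x
    by_cases hx : x ∈ s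
    · have hdisj : Disjoint (Ici x ∪ Ioi τ) (Iio x ∩ Iic τ ∩ s) :=
        disjoint_left.2 fun y hy hy' =>
          hy.elim (fun h => not_le.2 (mem_Iio.1 hy'.1.1) (mem_Ici.1 h))
            (fun h => not_lt.2 (mem_Iic.1 hy'.1.2) (mem_Ioi.1 h))
      have hIoi : Ioi (min x τ) = Ioi x ∪ Ioi τ := by ext; simp
      rw [preimage_cureTime_slice_of_mem hx, measure_union hdisj
        ((measurableSet_Iio.inter measurableSet_Iic).inter hs), inter_assoc,
        indicator_of_mem hx, hIoi]
      exact congrArg (· + _) (measure_congr (Ioi_ae_eq_Ici.symm.union (ae_eq_refl _)))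
    · rw [preimage_cureTime_slice_of_notMem hx, indicator_of_notMem hx, zero_add, inter_assoc]
  have hmeas : Measurable fun x => νD (Ioi (min x τ)) :=
    (measurable_measure_Ioi νD).comp (measurable_id.min measurable_const)
  rw [Measure.prod_apply (measurable_cureTime τ hs), lintegral_congr hslice,
    lintegral_add_left (hmeas.indicator hs), lintegral_indicator hs,
    lintegral_measure_Iio_inter νO νD (measurableSet_Iic.inter hs)]

theorem withDensity_prod_preimage_cureTime {f g : ℝ → ℝ≥0∞} (hf : Measurable f)
    (hg : Measurable g) (τ : ℝ) {s : Set ℝ} (hs : MeasurableSet s) :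
    (volume.withDensity f).prod (volume.withDensity g) (cureTime τ ⁻¹' s) =
      ∫⁻ t in s, f t * volume.withDensity g (Ioi (min t τ)) +
        (Iic τ).indicator (fun t => g t * volume.withDensity f (Ioi t)) t := by
  have hG : Measurable fun t => volume.withDensity g (Ioi (min t τ)) :=
    (measurable_measure_Ioi _).comp (measurable_id.min measurable_const)
  have hF : Measurable fun t => volume.withDensity f (Ioi t) := measurable_measure_Ioi _
  rw [prod_preimage_cureTime _ _ τ hs, setLIntegral_withDensity_eq_setLIntegral_mul _ hf hG hs,
    setLIntegral_withDensity_eq_setLIntegral_mul _ hg hF (measurableSet_Iic.inter hs),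
    ← setLIntegral_indicator measurableSet_Iic, ← lintegral_add_left (hf.mul hG)]
  rfl

theorem ae_density_eq_zero_of_survival_eq_zero {Ω : Type*} [MeasurableSpace Ω]
    (μ : Measure Ω) [IsFiniteMeasure μ] {X : Ω → ℝ} (hX : Measurable X) {f : ℝ → ℝ}
    (hf : Measurable f) (hf_nonneg : ∀ t, 0 ≤ f t)
    (hXmap : μ.map X = volume.withDensity fun t => ENNReal.ofReal (f t)) :
    ∀ᵐ t, (μ {ω | t < X ω}).toReal = 0 → f t = 0 := by
  filter_upwards [ae_eq_zero_of_withDensity_Ioi_eq_zero hf.ennreal_ofReal] with t ht hzero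
  rw [← hXmap, ← ofReal_toReal_measure_lt μ hX, hzero, ENNReal.ofReal_zero] at ht
  exact le_antisymm (ENNReal.ofReal_eq_zero.1 (ht rfl)) (hf_nonneg t)

/- `fO t / SO t` is the junk value `0` when `SO t = 0`. -/
theorem ofReal_density_eq_hazard_mul_survival {fO fD SO SD : ℝ → ℝ} {τ t : ℝ}
    (hfO : 0 ≤ fO t) (hfD : 0 ≤ fD t) (hSO : 0 ≤ SO t) (hSD : 0 ≤ SD t)
    (hO : SO t = 0 → fO t = 0) (hD : SD t = 0 → fD t = 0) :
    ENNReal.ofReal (fO t) * ENNReal.ofReal (SD (min t τ)) +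
        (Iic τ).indicator (fun t => ENNReal.ofReal (fD t) * ENNReal.ofReal (SO t)) t =
      ENNReal.ofReal ((fO t / SO t + fD t / SD t * (if t ≤ τ then 1 else 0)) * SO t *
        SD (min t τ)) := by
  rcases le_or_gt t τ with h | h
  · rw [min_eq_left h, indicator_of_mem (mem_Iic.2 h), if_pos h, mul_one,
      div_add_div_mul_mul_of_imp hO hD,
      ENNReal.ofReal_add (mul_nonneg hfO hSD) (mul_nonneg hfD hSO),
      ENNReal.ofReal_mul hfO, ENNReal.ofReal_mul hfD]
  · rw [min_eq_right h.le, indicator_of_notMem (s := Iic τ) h.not_ge, if_neg h.not_ge,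
      mul_zero, add_zero, add_zero, div_mul_cancel_of_imp hO, ENNReal.ofReal_mul hfO]

theorem stmt15_general {Ω : Type*} [MeasurableSpace Ω] (μ : Measure Ω) [IsProbabilityMeasure μ]
    (O D : Ω → ℝ) (hOmeas : Measurable O) (hDmeas : Measurable D)
    (hindep : IndepFun O D μ) (τ : ℝ)
    (fO fD : ℝ → ℝ) (hfOm : Measurable fO) (hfDm : Measurable fD)
    (hfOnn : ∀ t, 0 ≤ fO t) (hfDnn : ∀ t, 0 ≤ fD t)
    (hOmap : Measure.map O μ = volume.withDensity (fun t => ENNReal.ofReal (fO t)))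
    (hDmap : Measure.map D μ = volume.withDensity (fun t => ENNReal.ofReal (fD t)))
    (SO SD U hO hD : ℝ → ℝ)
    (hSO : ∀ t, SO t = (μ {ω | t < O ω}).toReal)
    (hSD : ∀ t, SD t = (μ {ω | t < D ω}).toReal)
    (hU : ∀ t, U t = (SD t - SD τ) * (if t ≤ τ then 1 else 0) + SD τ)
    (hhO : ∀ t, hO t = fO t / SO t) (hhD : ∀ t, hD t = fD t / SD t) :
    ∀ s : Set ℝ, MeasurableSet s →
      μ {ω | (if D ω ≤ τ then min (O ω) (D ω) else O ω) ∈ s} =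
        ∫⁻ t in s,
          ENNReal.ofReal ((hO t + hD t * (if t ≤ τ then 1 else 0)) * SO t * U t) := by
  intro s hs
  have hSO_eq : ∀ t, μ.map O (Ioi t) = ENNReal.ofReal (SO t) := fun t =>
    hSO t ▸ (ofReal_toReal_measure_lt μ hOmeas t).symm
  have hSD_eq : ∀ t, μ.map D (Ioi t) = ENNReal.ofReal (SD t) := fun t =>
    hSD t ▸ (ofReal_toReal_measure_lt μ hDmeas t).symm
  have hU_eq : ∀ t, U t = SD (min t τ) := fun t => by
    rcases le_or_gt t τ with h | h
    · simp [hU, h]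
    · simp [hU, h.not_ge, h.le]
  have hlaw : μ {ω | (if D ω ≤ τ then min (O ω) (D ω) else O ω) ∈ s} =
      (μ.map O).prod (μ.map D) (cureTime τ ⁻¹' s) := by
    rw [← (indepFun_iff_map_prod_eq_prod_map_map hOmeas.aemeasurable
      hDmeas.aemeasurable).1 hindep, Measure.map_apply (hOmeas.prodMk hDmeas)
      (measurable_cureTime τ hs)]
    rfl
  rw [hlaw, hOmap, hDmap, withDensity_prod_preimage_cureTime hfOm.ennreal_ofReal
    hfDm.ennreal_ofReal τ hs, ← hOmap, ← hDmap]
  simp only [hSO_eq, hSD_eq, hhO, hhD, hU_eq]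
  refine lintegral_congr_ae (ae_restrict_of_ae ?_)
  filter_upwards [ae_density_eq_zero_of_survival_eq_zero μ hOmeas hfOm hfOnn hOmap,
    ae_density_eq_zero_of_survival_eq_zero μ hDmeas hfDm hfDnn hDmap] with t hO_null hD_null
  exact ofReal_density_eq_hazard_mul_survival (hfOnn t) (hfDnn t)
    (hSO t ▸ ENNReal.toReal_nonneg) (hSD t ▸ ENNReal.toReal_nonneg)
    (hSO t ▸ hO_null) (hSD t ▸ hD_null)

/-- Likelihood contribution `δ = 3` in the cure time model: for independent absolutely
continuous `O, D` with hazards `hO = f_O/S_O`, `hD = f_D/S_D`, and `τ > 0`, the random time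
`T = min(O,D)·1{D ≤ τ} + O·1{D > τ}` has density
`f_T(t) = (hO(t) + hD(t)·1{t ≤ τ}) · S_O(t) · U_D(t;τ)`,
where `U_D(t;τ) = (S_D(t) − S_D(τ))·1{t ≤ τ} + S_D(τ)`. -/
theorem stmt15 {Ω : Type*} [MeasurableSpace Ω] (μ : Measure Ω) [IsProbabilityMeasure μ]
    (O D : Ω → ℝ) (hOmeas : Measurable O) (hDmeas : Measurable D)
    (hOnn : ∀ ω, 0 ≤ O ω) (hDnn : ∀ ω, 0 ≤ D ω)
    (hindep : IndepFun O D μ) (τ : ℝ) (hτ : 0 < τ)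
    (fO fD : ℝ → ℝ) (hfOm : Measurable fO) (hfDm : Measurable fD)
    (hfOnn : ∀ t, 0 ≤ fO t) (hfDnn : ∀ t, 0 ≤ fD t)
    (hOmap : Measure.map O μ = volume.withDensity (fun t => ENNReal.ofReal (fO t)))
    (hDmap : Measure.map D μ = volume.withDensity (fun t => ENNReal.ofReal (fD t)))
    (SO SD U hO hD : ℝ → ℝ)
    (hSO : ∀ t, SO t = (μ {ω | t < O ω}).toReal)
    (hSD : ∀ t, SD t = (μ {ω | t < D ω}).toReal)
    (hU : ∀ t, U t = (SD t - SD τ) * (if t ≤ τ then 1 else 0) + SD τ)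
    (hhO : ∀ t, hO t = fO t / SO t) (hhD : ∀ t, hD t = fD t / SD t) :
    ∀ s : Set ℝ, MeasurableSet s →
      μ {ω | (if D ω ≤ τ then min (O ω) (D ω) else O ω) ∈ s} =
        ∫⁻ t in s,
          ENNReal.ofReal ((hO t + hD t * (if t ≤ τ then 1 else 0)) * SO t * U t) :=
  stmt15_general μ O D hOmeas hDmeas hindep τ fO fD hfOm hfDm hfOnn hfDnn hOmap hDmap SO SD U hO hD
    hSO hSD hU hhO hhD
end
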